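/- Guarantee of seed-based threshold rounding: let C, D be edge weights on a finite set V, let x ∈ Lasserre_r(V), and let E ⊆ {{a,b} : a,b ∈ V, a ≠ b} be a set of seed edges whose endpoint set N satisfies |N| + 2 ≤ r + 1. Let P^⊥ be the orthogonal projection of ℝ^Υ onto the orthogonal complement of span{x_a − x_b : {a,b} ∈ E}. Assume Σ_{u<v} D_{u,v}‖x_u − x_v‖² > 0 and that ρ := (Σ_{u<v} D_{u,v}‖P^⊥(x_u − x_v)‖²)/(Σ_{u<v} D_{u,v}‖x_u − x_v‖²) < 1. Then there exist a labeling f : N → {0,1} and a threshold τ ∈ ℝ such that the set T = {u ∈ V : ⟨x_N(f), x_u⟩ ≥ τ} satisfies D(T) > 0 and Φ_T ≤ Φ^SDP · (1 − ρ)^{−1}, where Φ^SDP := (Σ_{u<v} C_{u,v}‖x_u − x_v‖²)/(Σ_{u<v} D_{u,v}‖x_u − x_v‖²). -/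

import Mathlib

open scoped RealInnerProductSpace

/-- Extend a labeling of the subset `N` to all of `V` by assigning `false` outside `N`. -/
def extendLab {V : Type*} [DecidableEq V] (N : Finset V) (g : {a // a ∈ N} → Bool) :
    V → Bool :=
  fun v => if h : v ∈ N then g ⟨v, h⟩ else false

/-- `x` satisfies `r` rounds of the Lasserre hierarchy (for 0/1 labelings of `V`),
with vectors in `ℝ^d`.  A collection is encoded as a function on all finite subsets `S`
and all full labelings `f : V → Bool`, where `x S f` may depend only on the restriction
of `f` to `S`. -/
structure IsLasserre (V : Type*) [Fintype V] [DecidableEq V] (r d : ℕ)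
    (x : Finset V → (V → Bool) → EuclideanSpace ℝ (Fin d)) : Prop where
  /-- `x S f` depends only on the labels of the vertices in `S`. -/
  localDep : ∀ S : Finset V, ∀ f g : V → Bool, (∀ u ∈ S, f u = g u) → x S f = x S g
  /-- (a) `x_∅ ≠ 0`. -/
  nonzero : x ∅ (fun _ => false) ≠ 0
  /-- (b) orthogonality of inconsistent labelings. -/
  ortho : ∀ S T : Finset V, S.card ≤ r + 1 → T.card ≤ r + 1 →
    ∀ f g : V → Bool, (∃ u ∈ S ∩ T, f u ≠ g u) → ⟪x S f, x T g⟫ = 0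
  /-- (c) consistency: the inner product depends only on `S ∪ T` and the combined labeling. -/
  consistent : ∀ S T A B : Finset V, S.card ≤ r + 1 → T.card ≤ r + 1 →
    A.card ≤ r + 1 → B.card ≤ r + 1 → S ∪ T = A ∪ B →
    ∀ h : V → Bool, ⟪x S h, x T h⟫ = ⟪x A h, x B h⟫
  /-- (d) for each vertex the label probabilities sum to `‖x_∅‖²`. -/
  unitTotal : ∀ u : V,
    ‖x {u} (fun _ => false)‖ ^ 2 + ‖x {u} (fun _ => true)‖ ^ 2
      = ‖x ∅ (fun _ => false)‖ ^ 2
  /-- (e) marginalization over the label of one vertex. -/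
  marginal : ∀ S : Finset V, S.card ≤ r + 1 → ∀ u ∈ S, ∀ f : V → Bool,
    x S (Function.update f u false) + x S (Function.update f u true) = x (S.erase u) f

/-- The vector `x_u = x_{{u}}(1)` associated with a single vertex. -/
def xVec {V : Type*} [Fintype V] [DecidableEq V] {d : ℕ}
    (x : Finset V → (V → Bool) → EuclideanSpace ℝ (Fin d)) (u : V) :
    EuclideanSpace ℝ (Fin d) :=
  x {u} (fun _ => true)


/-- The demand/cost-weighted sum `Σ_{u<v} W_{u,v} ‖x_u − x_v‖²`,
computed as half of the symmetric double sum. -/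
noncomputable def edgeSum {V : Type*} [Fintype V] [DecidableEq V] {d : ℕ} (W : V → V → ℝ)
    (x : Finset V → (V → Bool) → EuclideanSpace ℝ (Fin d)) : ℝ :=
  (∑ u : V, ∑ v : V, W u v * ‖xVec x u - xVec x v‖ ^ 2) / 2

/-- Weight of edges crossing the cut `(T, V∖T)`:
`Σ_{u<v} W_{u,v} |1_T(u) − 1_T(v)|`, computed as half of the symmetric double sum. -/
noncomputable def cutVal {V : Type*} [Fintype V] [DecidableEq V]
    (W : V → V → ℝ) (T : Finset V) : ℝ :=
  (∑ u : V, ∑ v : V, W u v *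
    |(if u ∈ T then (1 : ℝ) else 0) - (if v ∈ T then (1 : ℝ) else 0)|) / 2

/-- `‖P^⊥ z‖²`, where `P^⊥` is the orthogonal projection onto the orthogonal complement of
`span{x_a − x_b : (a,b) ∈ E}`. -/
noncomputable def perpNormSq {V : Type*} [Fintype V] [DecidableEq V] {d : ℕ}
    (x : Finset V → (V → Bool) → EuclideanSpace ℝ (Fin d))
    (E : Finset (V × V)) (z : EuclideanSpace ℝ (Fin d)) : ℝ :=
  ‖z - (Submodule.orthogonalProjection
      (Submodule.span ℝ ((fun p : V × V => xVec x p.1 - xVec x p.2) '' ↑E)) z :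
        EuclideanSpace ℝ (Fin d))‖ ^ 2


section Helpers
set_option linter.unusedSectionVars false
variable {V : Type*} [Fintype V] [DecidableEq V]

/-- Extend labeling `h` of `S` by default `f` outside `S`. -/
def labExt (S : Finset V) (f : V → Bool) (h : {b // b ∈ S} → Bool) : V → Bool :=
  fun v => if hv : v ∈ S then h ⟨v, hv⟩ else f v

lemma labExt_empty (f : V → Bool) (h : {b // b ∈ (∅ : Finset V)} → Bool) :
    labExt ∅ f h = f := by
  funext v; simp [labExt]

lemma labExt_of_mem {S : Finset V} (f : V → Bool) (h : {b // b ∈ S} → Bool) {v : V}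
    (hv : v ∈ S) : labExt S f h v = h ⟨v, hv⟩ := by
  simp [labExt, hv]

lemma labExt_of_not_mem {S : Finset V} (f : V → Bool) (h : {b // b ∈ S} → Bool) {v : V}
    (hv : v ∉ S) : labExt S f h v = f v := by
  simp [labExt, hv]

/-- Combine labelings of two disjoint sets into a labeling of `M = S ∪ T`. -/
def combineEquiv (S T M : Finset V) (hd : Disjoint S T) (hM : S ∪ T = M) :
    (({b // b ∈ S} → Bool) × ({b // b ∈ T} → Bool)) ≃ ({b // b ∈ M} → Bool) where
  toFun p b := if hb : (b : V) ∈ S then p.1 ⟨b, hb⟩ else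
    p.2 ⟨b, by
      have hbM : (b : V) ∈ S ∪ T := hM ▸ b.2
      exact (Finset.mem_union.mp hbM).resolve_left hb⟩
  invFun G := (fun b => G ⟨b, by rw [← hM]; exact Finset.mem_union_left _ b.2⟩,
               fun b => G ⟨b, by rw [← hM]; exact Finset.mem_union_right _ b.2⟩)
  left_inv p := by
    ext b
    · simp [b.2]
    · have hbS : (b : V) ∉ S := Finset.disjoint_right.mp hd b.2
      simp [hbS]
  right_inv G := by
    funext b
    by_cases hb : (b : V) ∈ S <;> simp [hb]

lemma combineEquiv_apply_mem_left {S T M : Finset V} (hd : Disjoint S T) (hM : S ∪ T = M)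
    (p : ({b // b ∈ S} → Bool) × ({b // b ∈ T} → Bool)) (b : {b // b ∈ M})
    (hb : (b : V) ∈ S) : combineEquiv S T M hd hM p b = p.1 ⟨b, hb⟩ := by
  simp [combineEquiv, hb]

lemma combineEquiv_apply_mem_right {S T M : Finset V} (hd : Disjoint S T) (hM : S ∪ T = M)
    (p : ({b // b ∈ S} → Bool) × ({b // b ∈ T} → Bool)) (b : {b // b ∈ M})
    (hb : (b : V) ∈ T) : combineEquiv S T M hd hM p b
      = p.2 ⟨b, hb⟩ := by
  have hbS : (b : V) ∉ S := Finset.disjoint_right.mp hd hb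
  simp [combineEquiv, hbS]

/-- Splitting a labeling of `insert a S` into a label of `a` and a labeling of `S`. -/
def insertLabEquiv (a : V) (S : Finset V) (ha : a ∉ S) :
    (Bool × ({b // b ∈ S} → Bool)) ≃ ({b // b ∈ insert a S} → Bool) where
  toFun p b := if hb : (b : V) = a then p.1 else
    p.2 ⟨b, (Finset.mem_insert.mp b.2).resolve_left hb⟩
  invFun G := (G ⟨a, Finset.mem_insert_self a S⟩,
               fun b => G ⟨b, Finset.mem_insert_of_mem b.2⟩)
  left_inv p := by
    ext
    · simp
    · next b =>
      have : (b : V) ≠ a := fun hh => ha (hh ▸ b.2)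
      simp [this]
  right_inv G := by
    funext b
    by_cases hb : (b : V) = a
    · simp only [hb, dif_pos]
      congr 1
      exact Subtype.ext hb.symm
    · simp [hb]

lemma labExt_insert (a : V) (S : Finset V) (ha : a ∉ S) (f : V → Bool)
    (j : Bool) (h : {b // b ∈ S} → Bool) :
    labExt (insert a S) f (insertLabEquiv a S ha (j, h))
      = Function.update (labExt S f h) a j := by
  funext v
  by_cases hv : v = a
  · subst hv
    rw [labExt_of_mem f _ (Finset.mem_insert_self v S)]
    simp [insertLabEquiv, Function.update_self]
  · rw [Function.update_of_ne hv]
    by_cases hvS : v ∈ S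
    · rw [labExt_of_mem f _ (Finset.mem_insert_of_mem hvS), labExt_of_mem f h hvS]
      simp [insertLabEquiv, hv]
    · have : v ∉ insert a S := by simp [hv, hvS]
      rw [labExt_of_not_mem f _ this, labExt_of_not_mem f h hvS]

/-- Sum of squared norms for pairwise orthogonal families. -/
lemma norm_sq_sum_of_ortho {ι : Type*} {d : ℕ} (s : Finset ι)
    (v : ι → EuclideanSpace ℝ (Fin d))
    (h : ∀ i ∈ s, ∀ j ∈ s, i ≠ j → ⟪v i, v j⟫ = 0) :
    ‖∑ i ∈ s, v i‖ ^ 2 = ∑ i ∈ s, ‖v i‖ ^ 2 := by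
  rw [← real_inner_self_eq_norm_sq, sum_inner]
  refine Finset.sum_congr rfl fun i hi => ?_
  rw [inner_sum, Finset.sum_eq_single i (fun j hj hji => h i hi j hj (fun e => hji e.symm)) 
    (fun hi' => absurd hi hi'), real_inner_self_eq_norm_sq]

/-- Averaging lemma. -/
lemma avg_exists {ι : Type*} (s : Finset ι) (a b : ι → ℝ) (K : ℝ)
    (ha : ∀ i ∈ s, 0 ≤ a i) (hb : ∀ i ∈ s, 0 ≤ b i)
    (hab : ∑ i ∈ s, a i ≤ K * ∑ i ∈ s, b i) (hpos : 0 < ∑ i ∈ s, b i) :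
    ∃ i ∈ s, 0 < b i ∧ a i ≤ K * b i := by
  by_contra hcon
  push_neg at hcon
  obtain ⟨i0, hi0, hbi0⟩ : ∃ i ∈ s, 0 < b i := by
    by_contra h'
    push_neg at h'
    have : ∑ i ∈ s, b i ≤ 0 := Finset.sum_nonpos h'
    linarith
  have hlt : ∑ i ∈ s, K * b i < ∑ i ∈ s, a i := by
    refine Finset.sum_lt_sum (fun i hi => ?_) ⟨i0, hi0, hcon i0 hi0 hbi0⟩
    rcases (hb i hi).lt_or_eq with hbi | hbi
    · exact (hcon i hi hbi).le
    · rw [← hbi, mul_zero]; exact ha i hi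
  rw [← Finset.mul_sum] at hlt
  linarith
end Helpers


/-- Layer-cake / threshold decomposition of `|y u − y v|`. -/
lemma layercake {V : Type*} [Fintype V] [DecidableEq V] [Nonempty V] (y : V → ℝ) :
    ∃ (n : ℕ) (τ δ : ℕ → ℝ), (∀ i, 0 ≤ δ i) ∧
      ∀ u v : V, |y u - y v| = ∑ i ∈ Finset.range n, δ i *
        |(if τ i ≤ y u then (1 : ℝ) else 0) - (if τ i ≤ y v then (1 : ℝ) else 0)| := by
  classical
  set m : Finset ℝ := Finset.image y Finset.univ with hm
  have hmne : m.Nonempty := ⟨y (Classical.arbitrary V), Finset.mem_image_of_mem y (Finset.mem_univ _)⟩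
  set n : ℕ := m.card with hn
  have hn1 : 1 ≤ n := Finset.card_pos.mpr hmne
  set iso := m.orderIsoOfFin rfl with hiso
  set e : ℕ → ℝ := fun k => (iso ⟨min k (n - 1), by omega⟩ : ℝ) with he
  have emono : Monotone e := by
    intro k l hkl
    have : (⟨min k (n-1), by omega⟩ : Fin n) ≤ ⟨min l (n-1), by omega⟩ := by
      simp only [Fin.mk_le_mk]; omega
    exact_mod_cast iso.monotone this
  -- index of a vertex
  have hymem : ∀ u : V, y u ∈ m := fun u => Finset.mem_image_of_mem y (Finset.mem_univ _)
  set idx : V → Fin n := fun u => iso.symm ⟨y u, hymem u⟩ with hidx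
  have hidxlt : ∀ u, (idx u : ℕ) ≤ n - 1 := fun u => by have := (idx u).2; omega
  have heidx : ∀ u, e (idx u) = y u := by
    intro u
    have h1 : min ((idx u : ℕ)) (n-1) = (idx u : ℕ) := min_eq_left (hidxlt u)
    have : (⟨min ((idx u : ℕ)) (n-1), by omega⟩ : Fin n) = idx u := by
      apply Fin.ext; simp [h1]
    rw [he]; simp only [this, hidx]
    have h4 : ∀ k (hk : k < n), k = (iso.symm ⟨y u, hymem u⟩ : ℕ) →
        ((iso ⟨k, hk⟩ : m) : ℝ) = y u := by
      rintro k hk rfl; simp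
    exact h4 _ _ h1
  have hle : ∀ (k : ℕ) (u : V), (e k ≤ y u ↔ min k (n-1) ≤ (idx u : ℕ)) := by
    intro k u
    rw [← heidx u, he]
    constructor
    · intro h
      have : (⟨min k (n-1), by omega⟩ : Fin n) ≤ ⟨min ((idx u:ℕ)) (n-1), by omega⟩ := by
        rw [← iso.le_iff_le]; exact_mod_cast h
      have h2 := Fin.mk_le_mk.mp this
      omega
    · intro h
      apply iso.monotone
      simp only [Fin.mk_le_mk]
      omega
  refine ⟨n, fun i => e (i+1), fun i => e (i+1) - e i, fun i => sub_nonneg.mpr (emono (by omega)), ?_⟩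
  have key : ∀ u v : V, y v ≤ y u → y u - y v = ∑ i ∈ Finset.range n, (e (i+1) - e i) *
      |(if e (i+1) ≤ y u then (1 : ℝ) else 0) - (if e (i+1) ≤ y v then (1 : ℝ) else 0)| := by
    intro u v huv
    set p : ℕ := (idx v : ℕ) with hp
    set q : ℕ := (idx u : ℕ) with hq
    have hpq : p ≤ q := by
      have : idx v ≤ idx u := by
        rw [hidx]
        rw [OrderIso.le_iff_le (iso.symm)]
        exact Subtype.mk_le_mk.mpr huv
      exact this
    have hterm : ∀ i ∈ Finset.range n, (e (i+1) - e i) *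
        |(if e (i+1) ≤ y u then (1 : ℝ) else 0) - (if e (i+1) ≤ y v then (1 : ℝ) else 0)|
        = if i ∈ Finset.Ico p q then e (i+1) - e i else 0 := by
      intro i hi
      rw [Finset.mem_range] at hi
      simp only [hle _ u, hle _ v, ← hq, ← hp, Finset.mem_Ico]
      by_cases h1 : min (i+1) (n-1) ≤ q <;> by_cases h2 : min (i+1) (n-1) ≤ p
      · have : ¬ (p ≤ i ∧ i < q) := by omega
        simp [h1, h2, this]
      · -- cut separates
        by_cases h3 : i + 1 ≤ n - 1
        · have : p ≤ i ∧ i < q := by omega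
          simp [h1, h2, this]
        · -- i = n-1, e(i+1) = e i, δ = 0
          have hi1 : min (i+1) (n-1) = n-1 := by omega
          have hii : min i (n-1) = n - 1 := by omega
          have hee : e (i+1) = e i := by
            show (iso ⟨min (i+1) (n-1), by omega⟩ : ℝ) = iso ⟨min i (n-1), by omega⟩
            have hfe : (⟨min (i+1) (n-1), by omega⟩ : Fin n) = ⟨min i (n-1), by omega⟩ :=
              Fin.ext (by simp [hi1, hii])
            rw [hfe]
          rw [hee, sub_self, zero_mul]
          by_cases h4 : p ≤ i ∧ i < q <;> simp [h4]
      · exfalso; omega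
      · have : ¬ (p ≤ i ∧ i < q) := by omega
        simp [h1, h2, this]
    rw [Finset.sum_congr rfl hterm, ← Finset.sum_filter]
    have hIco : (Finset.range n).filter (fun i => i ∈ Finset.Ico p q) = Finset.Ico p q := by
      ext i
      simp only [Finset.mem_filter, Finset.mem_range, Finset.mem_Ico]
      have := hidxlt u
      rw [← hq] at this
      omega
    rw [hIco, Finset.sum_Ico_eq_sub _ hpq, Finset.sum_range_sub e, Finset.sum_range_sub e]
    have h1 : e q = y u := by rw [hq, heidx]
    have h2 : e p = y v := by rw [hp, heidx]
    rw [h1, h2]; ring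
  intro u v
  rcases le_total (y v) (y u) with h | h
  · rw [abs_of_nonneg (by linarith), key u v h]
  · rw [abs_of_nonpos (by linarith), neg_sub, key v u h]
    congr 1; funext i
    rw [abs_sub_comm]

section Lasserre
set_option linter.unusedSectionVars false
set_option maxHeartbeats 1000000
variable {V : Type*} [Fintype V] [DecidableEq V] {r d : ℕ}
  {x : Finset V → (V → Bool) → EuclideanSpace ℝ (Fin d)} (hx : IsLasserre V r d x)

include hx

/-- Marginalization: summing over all labelings of `S` recovers `x T f`. -/
lemma sum_labExt (S T : Finset V) (hd : Disjoint S T) (hc : (S ∪ T).card ≤ r + 1)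
    (f : V → Bool) :
    ∑ h : {b // b ∈ S} → Bool, x (S ∪ T) (labExt S f h) = x T f := by
  classical
  revert f hd hc
  induction S using Finset.induction_on with
  | empty =>
    intro hd hc f
    haveI : IsEmpty {b // b ∈ (∅ : Finset V)} := ⟨fun b => (Finset.notMem_empty _ b.2)⟩
    rw [Fintype.sum_unique]
    rw [labExt_empty, Finset.empty_union]
  | @insert a S' ha ih =>
    intro hd hc f
    have haT : a ∉ T := Finset.disjoint_left.mp hd (Finset.mem_insert_self a S')
    have hd' : Disjoint S' T := Finset.disjoint_of_subset_left (Finset.subset_insert a S') hd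
    have hsub : S' ∪ T ⊆ insert a S' ∪ T :=
      Finset.union_subset_union_left (Finset.subset_insert a S')
    have hc' : (S' ∪ T).card ≤ r + 1 := le_trans (Finset.card_le_card hsub) hc
    rw [← Equiv.sum_comp (insertLabEquiv a S' ha), Fintype.sum_prod_type, Finset.sum_comm]
    have herase : ((insert a S') ∪ T).erase a = S' ∪ T := by
      ext b
      simp only [Finset.mem_erase, Finset.mem_union, Finset.mem_insert]
      constructor
      · rintro ⟨hba, hb | hb⟩
        · exact Or.inl (hb.resolve_left hba)
        · exact Or.inr hb
      · rintro (hb | hb)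
        · exact ⟨fun e => ha (e ▸ hb), Or.inl (Or.inr hb)⟩
        · exact ⟨fun e => haT (e ▸ hb), Or.inr hb⟩
    have step : ∀ h : {b // b ∈ S'} → Bool,
        ∑ j : Bool, x (insert a S' ∪ T) (labExt (insert a S') f (insertLabEquiv a S' ha (j, h)))
          = x (S' ∪ T) (labExt S' f h) := by
      intro h
      have hmarg := hx.marginal (insert a S' ∪ T) hc a
        (Finset.mem_union_left _ (Finset.mem_insert_self a S')) (labExt S' f h)
      rw [herase] at hmarg
      rw [Fintype.sum_bool]
      simp only [labExt_insert a S' ha f]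
      rw [add_comm] at hmarg
      exact hmarg
    calc ∑ h : {b // b ∈ S'} → Bool, ∑ j : Bool,
          x (insert a S' ∪ T) (labExt (insert a S') f (insertLabEquiv a S' ha (j, h)))
        = ∑ h : {b // b ∈ S'} → Bool, x (S' ∪ T) (labExt S' f h) := by
          refine Finset.sum_congr rfl fun h _ => step h
      _ = x T f := ih hd' hc' f

/-- Distinct labelings of `M` give orthogonal vectors. -/
lemma ortho_labExt (M : Finset V) (hc : M.card ≤ r + 1) (f f' : V → Bool)
    (h : ∃ b ∈ M, f b ≠ f' b) : ⟪x M f, x M f'⟫ = 0 := by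
  refine hx.ortho M M hc hc f f' ?_
  obtain ⟨b, hb, hbne⟩ := h
  exact ⟨b, by simpa using hb, hbne⟩

/-- Norm decomposition over labelings of `S`. -/
lemma norm_sq_labExt (S T : Finset V) (hd : Disjoint S T) (hc : (S ∪ T).card ≤ r + 1)
    (f : V → Bool) :
    ‖x T f‖ ^ 2 = ∑ h : {b // b ∈ S} → Bool, ‖x (S ∪ T) (labExt S f h)‖ ^ 2 := by
  rw [← sum_labExt hx S T hd hc f]
  rw [norm_sq_sum_of_ortho]
  intro h _ h' _ hne
  refine ortho_labExt hx _ hc _ _ ?_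
  have : ∃ b : {b // b ∈ S}, h b ≠ h' b := by
    by_contra hcon
    push_neg at hcon
    exact hne (funext hcon)
  obtain ⟨b, hb⟩ := this
  exact ⟨b, Finset.mem_union_left _ b.2, by
    rw [labExt_of_mem f h b.2, labExt_of_mem f h' b.2]; exact hb⟩

/-- Evaluation of `⟪x M f, x_u⟫` for `u ∈ M`. -/
lemma inner_xVec (M : Finset V) (hc : M.card ≤ r + 1) (u : V) (hu : u ∈ M)
    (f : V → Bool) : ⟪x M f, xVec x u⟫ = if f u = true then ‖x M f‖ ^ 2 else 0 := by
  have hcu : ({u} : Finset V).card ≤ r + 1 := by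
    rw [Finset.card_singleton]; omega
  by_cases hfu : f u = true
  · rw [if_pos hfu]
    have h1 : xVec x u = x {u} f := by
      refine hx.localDep {u} _ f fun b hb => ?_
      rw [Finset.mem_singleton] at hb
      subst hb; exact hfu.symm
    rw [h1]
    have hMu : M ∪ {u} = M ∪ M := by
      rw [Finset.union_self]
      exact Finset.union_eq_left.mpr (Finset.singleton_subset_iff.mpr hu)
    have h2 := hx.consistent M {u} M M hc hcu hc hc hMu f
    rw [h2, real_inner_self_eq_norm_sq]
  · rw [if_neg hfu]
    refine hx.ortho M {u} hc hcu f (fun _ => true) ?_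
    exact ⟨u, by simp [hu], by simpa using hfu⟩

/-- Splitting a sum over labelings of `M = S ∪ T`. -/
lemma sum_split (S T : Finset V) (hd : Disjoint S T) (f₀ : V → Bool)
    (F : (V → Bool) → ℝ) :
    ∑ G : {b // b ∈ S ∪ T} → Bool, F (labExt (S ∪ T) f₀ G)
      = ∑ h : {b // b ∈ S} → Bool, ∑ g : {b // b ∈ T} → Bool,
          F (labExt S (labExt T f₀ g) h) := by
  rw [← Equiv.sum_comp (combineEquiv S T (S ∪ T) hd rfl), Fintype.sum_prod_type]
  refine Finset.sum_congr rfl fun h _ => Finset.sum_congr rfl fun g _ => ?_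
  congr 1
  funext v
  by_cases hvS : v ∈ S
  · rw [labExt_of_mem _ _ (Finset.mem_union_left _ hvS), labExt_of_mem _ _ hvS,
      combineEquiv_apply_mem_left hd rfl (h, g) _ hvS]
  · by_cases hvT : v ∈ T
    · rw [labExt_of_mem _ _ (Finset.mem_union_right _ hvT), labExt_of_not_mem _ _ hvS,
        labExt_of_mem _ _ hvT, combineEquiv_apply_mem_right hd rfl (h, g) _ hvT]
    · have hvM : v ∉ S ∪ T := by simp [hvS, hvT]
      rw [labExt_of_not_mem _ _ hvM, labExt_of_not_mem _ _ hvS, labExt_of_not_mem _ _ hvT]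

/-- Sum of `‖x M (G)‖²` over labelings `G` of `M` agreeing with `l` at `u, v`. -/
lemma pair_sum (M : Finset V) (hc : M.card ≤ r + 1) (u v : V) (huv : u ≠ v)
    (hu : u ∈ M) (hv : v ∈ M) (l : V → Bool) :
    ∑ G : {b // b ∈ M} → Bool,
      (if labExt M (fun _ => false) G u = l u ∧ labExt M (fun _ => false) G v = l v
        then ‖x M (labExt M (fun _ => false) G)‖ ^ 2 else 0)
      = ‖x ({u, v} : Finset V) l‖ ^ 2 := by
  classical
  set T : Finset V := {u, v} with hT
  have hTM : T ⊆ M := by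
    rw [hT]
    exact Finset.insert_subset hu (Finset.singleton_subset_iff.mpr hv)
  set S : Finset V := M \ T with hS
  have hd : Disjoint S T := Finset.sdiff_disjoint
  have hM : S ∪ T = M := Finset.sdiff_union_of_subset hTM
  have huT : u ∈ T := Finset.mem_insert_self u {v}
  have hvT : v ∈ T := Finset.mem_insert_of_mem (Finset.mem_singleton_self v)
  have huS : u ∉ S := fun h => (Finset.mem_sdiff.mp h).2 huT
  have hvS : v ∉ S := fun h => (Finset.mem_sdiff.mp h).2 hvT
  rw [← hM]
  rw [sum_split hx S T hd (fun _ => false)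
    (fun φ => if φ u = l u ∧ φ v = l v then ‖x (S ∪ T) φ‖ ^ 2 else 0)]
  set gl : {b // b ∈ T} → Bool := fun b => l b with hgl
  have inner_eq : ∀ h : {b // b ∈ S} → Bool,
      (∑ g : {b // b ∈ T} → Bool,
        if (labExt S (labExt T (fun _ => false) g) h) u = l u ∧
           (labExt S (labExt T (fun _ => false) g) h) v = l v
          then ‖x (S ∪ T) (labExt S (labExt T (fun _ => false) g) h)‖ ^ 2 else 0)
      = ‖x (S ∪ T) (labExt S l h)‖ ^ 2 := by
    intro h
    have hval : ∀ g : {b // b ∈ T} → Bool,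
        ((labExt S (labExt T (fun _ => false) g) h) u = l u ∧
         (labExt S (labExt T (fun _ => false) g) h) v = l v) ↔ g = gl := by
      intro g
      rw [labExt_of_not_mem _ _ huS, labExt_of_mem _ _ huT,
        labExt_of_not_mem _ _ hvS, labExt_of_mem _ _ hvT]
      constructor
      · rintro ⟨h1, h2⟩
        funext b
        rcases Finset.mem_insert.mp b.2 with hb | hb
        · have : b = ⟨u, huT⟩ := Subtype.ext hb
          rw [this, h1]
        · rw [Finset.mem_singleton] at hb
          have : b = ⟨v, hvT⟩ := Subtype.ext hb
          rw [this, h2]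
      · rintro rfl
        exact ⟨rfl, rfl⟩
    have hsum : ∀ g : {b // b ∈ T} → Bool,
        (if (labExt S (labExt T (fun _ => false) g) h) u = l u ∧
           (labExt S (labExt T (fun _ => false) g) h) v = l v
          then ‖x (S ∪ T) (labExt S (labExt T (fun _ => false) g) h)‖ ^ 2 else 0)
        = (if g = gl then ‖x (S ∪ T) (labExt S (labExt T (fun _ => false) g) h)‖ ^ 2
            else 0) := by
      intro g
      exact if_congr (hval g) rfl rfl
    rw [Finset.sum_congr rfl (fun g _ => hsum g), Finset.sum_ite_eq' Finset.univ gl, 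
      if_pos (Finset.mem_univ gl)]
    have hld : x (S ∪ T) (labExt S (labExt T (fun _ => false) gl) h)
        = x (S ∪ T) (labExt S l h) := by
      refine hx.localDep _ _ _ fun b hb => ?_
      by_cases hbS : b ∈ S
      · rw [labExt_of_mem _ _ hbS, labExt_of_mem _ _ hbS]
      · have hbT : b ∈ T := (Finset.mem_union.mp hb).resolve_left hbS
        rw [labExt_of_not_mem _ _ hbS, labExt_of_mem _ _ hbT,
          labExt_of_not_mem _ _ hbS]
    rw [hld]
  rw [Finset.sum_congr rfl (fun h _ => inner_eq h)]
  rw [← norm_sq_labExt hx S T hd (by rw [hM]; exact hc) l]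

/-- `‖x_u − x_v‖²` in terms of the pair labelings. -/
lemma dist_identity (u v : V) (huv : u ≠ v) (h2r : 2 ≤ r + 1) :
    ‖xVec x u - xVec x v‖ ^ 2
      = ‖x ({u, v} : Finset V) (fun b => decide (b = u))‖ ^ 2
        + ‖x ({u, v} : Finset V) (fun b => decide (b = v))‖ ^ 2 := by
  classical
  set l11 : V → Bool := fun _ => true with hl11
  set l10 : V → Bool := fun b => decide (b = u) with hl10
  set l01 : V → Bool := fun b => decide (b = v) with hl01
  have hcard2 : ({u, v} : Finset V).card ≤ r + 1 := by
    rw [Finset.card_pair huv]; exact h2r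
  have hcard1 : ∀ w : V, ({w} : Finset V).card ≤ r + 1 := fun w => by
    rw [Finset.card_singleton]; omega
  have hvuv : v ∈ ({u, v} : Finset V) := Finset.mem_insert_of_mem (Finset.mem_singleton_self v)
  have huuv : u ∈ ({u, v} : Finset V) := Finset.mem_insert_self u {v}
  -- inner product
  have hinner : ⟪xVec x u, xVec x v⟫ = ‖x ({u, v} : Finset V) l11‖ ^ 2 := by
    have hun : ({u} : Finset V) ∪ {v} = ({u, v} : Finset V) ∪ ({u, v} : Finset V) := by
      rw [Finset.union_self, ← Finset.insert_eq]
    have := hx.consistent {u} {v} {u, v} {u, v} (hcard1 u) (hcard1 v) hcard2 hcard2 hun l11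
    rw [xVec, xVec]
    rw [show (x {u} fun _ => true) = x {u} l11 from rfl,
      show (x {v} fun _ => true) = x {v} l11 from rfl, this, real_inner_self_eq_norm_sq]
  -- marginal at v
  have herasev : ({u, v} : Finset V).erase v = {u} := by
    ext b
    simp only [Finset.mem_erase, Finset.mem_insert, Finset.mem_singleton]
    constructor
    · rintro ⟨h1, h2 | h2⟩
      · exact h2
      · exact absurd h2 h1
    · rintro rfl
      exact ⟨huv, Or.inl rfl⟩
  have heraseu : ({u, v} : Finset V).erase u = {v} := by
    rw [show ({u, v} : Finset V) = insert u {v} from rfl, Finset.erase_insert (by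
      rw [Finset.mem_singleton]; exact huv)]
  have hxu : ‖xVec x u‖ ^ 2 = ‖x ({u, v} : Finset V) l10‖ ^ 2
      + ‖x ({u, v} : Finset V) l11‖ ^ 2 := by
    have hmarg := hx.marginal {u, v} hcard2 v hvuv l11
    rw [herasev] at hmarg
    have hA : x ({u, v} : Finset V) (Function.update l11 v false)
        = x ({u, v} : Finset V) l10 := by
      refine hx.localDep _ _ _ fun b hb => ?_
      rcases Finset.mem_insert.mp hb with hb | hb
      · subst hb
        rw [Function.update_of_ne huv, hl11, hl10]
        simp
      · rw [Finset.mem_singleton] at hb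
        subst hb
        rw [Function.update_self, hl10]
        simp [Ne.symm huv]
    have hB : x ({u, v} : Finset V) (Function.update l11 v true)
        = x ({u, v} : Finset V) l11 := by
      refine hx.localDep _ _ _ fun b hb => ?_
      by_cases hbv : b = v
      · subst hbv; rw [Function.update_self]
      · rw [Function.update_of_ne hbv]
    have hAB : ⟪x ({u, v} : Finset V) (Function.update l11 v false),
        x ({u, v} : Finset V) (Function.update l11 v true)⟫ = 0 := by
      refine ortho_labExt hx _ hcard2 _ _ ⟨v, hvuv, ?_⟩
      rw [Function.update_self, Function.update_self]
      simp
    have hnorm : ‖xVec x u‖ ^ 2 = ‖x ({u, v} : Finset V) (Function.update l11 v false)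
        + x ({u, v} : Finset V) (Function.update l11 v true)‖ ^ 2 := by
      rw [hmarg]; rfl
    rw [hnorm, norm_add_sq_real, hAB, hA, hB]
    ring
  have hxv : ‖xVec x v‖ ^ 2 = ‖x ({u, v} : Finset V) l01‖ ^ 2
      + ‖x ({u, v} : Finset V) l11‖ ^ 2 := by
    have hmarg := hx.marginal {u, v} hcard2 u huuv l11
    rw [heraseu] at hmarg
    have hA : x ({u, v} : Finset V) (Function.update l11 u false)
        = x ({u, v} : Finset V) l01 := by
      refine hx.localDep _ _ _ fun b hb => ?_
      rcases Finset.mem_insert.mp hb with hb | hb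
      · subst hb
        rw [Function.update_self, hl01]
        simp [huv]
      · rw [Finset.mem_singleton] at hb
        subst hb
        rw [Function.update_of_ne (Ne.symm huv), hl11, hl01]
        simp
    have hB : x ({u, v} : Finset V) (Function.update l11 u true)
        = x ({u, v} : Finset V) l11 := by
      refine hx.localDep _ _ _ fun b hb => ?_
      by_cases hbu : b = u
      · subst hbu; rw [Function.update_self]
      · rw [Function.update_of_ne hbu]
    have hAB : ⟪x ({u, v} : Finset V) (Function.update l11 u false),
        x ({u, v} : Finset V) (Function.update l11 u true)⟫ = 0 := by
      refine ortho_labExt hx _ hcard2 _ _ ⟨u, huuv, ?_⟩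
      rw [Function.update_self, Function.update_self]
      simp
    have hnorm : ‖xVec x v‖ ^ 2 = ‖x ({u, v} : Finset V) (Function.update l11 u false)
        + x ({u, v} : Finset V) (Function.update l11 u true)‖ ^ 2 := by
      rw [hmarg]; rfl
    rw [hnorm, norm_add_sq_real, hAB, hA, hB]
    ring
  rw [norm_sub_sq_real, hinner, hxu, hxv]
  ring

lemma extendLab_eq (N : Finset V) (g : {b // b ∈ N} → Bool) :
    extendLab N g = labExt N (fun _ => false) g := rfl

omit hx in
lemma subset_insert2 (N : Finset V) (u v : V) : N ⊆ insert u (insert v N) :=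
  (Finset.subset_insert v N).trans (Finset.subset_insert u _)

/-- Fact A: `0 ≤ ⟪w_g, x_u⟫ ≤ ‖w_g‖²`. -/
lemma y_bounds (N : Finset V) (hNc : N.card + 1 ≤ r + 1) (g : {b // b ∈ N} → Bool)
    (u : V) :
    0 ≤ ⟪x N (extendLab N g), xVec x u⟫ ∧
      ⟪x N (extendLab N g), xVec x u⟫ ≤ ‖x N (extendLab N g)‖ ^ 2 := by
  classical
  set S : Finset V := insert u N \ N with hS
  have hd : Disjoint S N := Finset.sdiff_disjoint
  have hM : S ∪ N = insert u N := Finset.sdiff_union_of_subset (Finset.subset_insert u N)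
  have hc : (S ∪ N).card ≤ r + 1 := by
    rw [hM]
    exact le_trans (Finset.card_insert_le u N) hNc
  have huM : u ∈ S ∪ N := by rw [hM]; exact Finset.mem_insert_self u N
  set fg : V → Bool := extendLab N g with hfg
  have hsum := sum_labExt hx S N hd hc fg
  have hinner : ⟪x N fg, xVec x u⟫
      = ∑ h : {b // b ∈ S} → Bool, ⟪x (S ∪ N) (labExt S fg h), xVec x u⟫ := by
    rw [← hsum, sum_inner]
  have hterm : ∀ h : {b // b ∈ S} → Bool,
      ⟪x (S ∪ N) (labExt S fg h), xVec x u⟫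
        = if labExt S fg h u = true then ‖x (S ∪ N) (labExt S fg h)‖ ^ 2 else 0 :=
    fun h => inner_xVec hx (S ∪ N) hc u huM (labExt S fg h)
  constructor
  · rw [hinner]
    refine Finset.sum_nonneg fun h _ => ?_
    rw [hterm h]
    split
    · positivity
    · exact le_refl 0
  · rw [hinner, norm_sq_labExt hx S N hd hc fg]
    refine Finset.sum_le_sum fun h _ => ?_
    rw [hterm h]
    split
    · exact le_refl _
    · positivity

/-- Fact B: `Σ_g |⟪w_g, x_u − x_v⟫| ≤ ‖x_u − x_v‖²`. -/
lemma sum_abs_le (N : Finset V) (hNc : N.card + 2 ≤ r + 1) (u v : V) :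
    ∑ g : {b // b ∈ N} → Bool, |⟪x N (extendLab N g), xVec x u - xVec x v⟫|
      ≤ ‖xVec x u - xVec x v‖ ^ 2 := by
  classical
  by_cases huv : u = v
  · subst huv
    simp
  set z : EuclideanSpace ℝ (Fin d) := xVec x u - xVec x v with hz
  set M0 : Finset V := insert u (insert v N) with hM0
  set S : Finset V := M0 \ N with hS
  have hd : Disjoint S N := Finset.sdiff_disjoint
  have hM : S ∪ N = M0 := Finset.sdiff_union_of_subset (subset_insert2 N u v)
  have hc : (S ∪ N).card ≤ r + 1 := by
    rw [hM]
    calc M0.card ≤ (insert v N).card + 1 := Finset.card_insert_le _ _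
      _ ≤ N.card + 1 + 1 := by
          have := Finset.card_insert_le v N
          omega
      _ ≤ r + 1 := by omega
  have huM : u ∈ S ∪ N := by rw [hM, hM0]; exact Finset.mem_insert_self _ _
  have hvM : v ∈ S ∪ N := by
    rw [hM, hM0]
    exact Finset.mem_insert_of_mem (Finset.mem_insert_self _ _)
  set l10 : V → Bool := fun b => decide (b = u) with hl10
  set l01 : V → Bool := fun b => decide (b = v) with hl01
  -- step 1: per-g bound by sum over labelings of S ∪ N
  have step1 : ∀ g : {b // b ∈ N} → Bool,
      |⟪x N (extendLab N g), z⟫|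
        ≤ ∑ h : {b // b ∈ S} → Bool,
            |⟪x (S ∪ N) (labExt S (extendLab N g) h), z⟫| := by
    intro g
    rw [← sum_labExt hx S N hd hc (extendLab N g), sum_inner]
    exact Finset.abs_sum_le_sum_abs _ _
  have step2 : ∑ g : {b // b ∈ N} → Bool, ∑ h : {b // b ∈ S} → Bool,
      |⟪x (S ∪ N) (labExt S (extendLab N g) h), z⟫|
      = ∑ G : {b // b ∈ S ∪ N} → Bool,
          |⟪x (S ∪ N) (labExt (S ∪ N) (fun _ => false) G), z⟫| := by
    rw [sum_split hx S N hd (fun _ => false) (fun φ => |⟪x (S ∪ N) φ, z⟫|)]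
    rw [Finset.sum_comm]
    rfl
  have step3 : ∀ G : {b // b ∈ S ∪ N} → Bool,
      |⟪x (S ∪ N) (labExt (S ∪ N) (fun _ => false) G), z⟫|
      = (if labExt (S ∪ N) (fun _ => false) G u = l10 u ∧
            labExt (S ∪ N) (fun _ => false) G v = l10 v
          then ‖x (S ∪ N) (labExt (S ∪ N) (fun _ => false) G)‖ ^ 2 else 0)
        + (if labExt (S ∪ N) (fun _ => false) G u = l01 u ∧
            labExt (S ∪ N) (fun _ => false) G v = l01 v
          then ‖x (S ∪ N) (labExt (S ∪ N) (fun _ => false) G)‖ ^ 2 else 0) := by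
    intro G
    set φ : V → Bool := labExt (S ∪ N) (fun _ => false) G with hφ
    have h10u : l10 u = true := by simp [hl10]
    have h10v : l10 v = false := by simp [hl10]; exact fun e => huv e.symm
    have h01u : l01 u = false := by simp [hl01]; exact huv
    have h01v : l01 v = true := by simp [hl01]
    have hiu := inner_xVec hx (S ∪ N) hc u huM φ
    have hiv := inner_xVec hx (S ∪ N) hc v hvM φ
    rw [hz, inner_sub_right, hiu, hiv, h10u, h10v, h01u, h01v]
    have hn : (0:ℝ) ≤ ‖x (S ∪ N) φ‖ ^ 2 := by positivity
    cases hu' : φ u <;> cases hv' : φ v <;> simp [hu', hv', abs_of_nonneg, hn, abs_of_nonpos]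
  calc ∑ g : {b // b ∈ N} → Bool, |⟪x N (extendLab N g), z⟫|
      ≤ ∑ g : {b // b ∈ N} → Bool, ∑ h : {b // b ∈ S} → Bool,
          |⟪x (S ∪ N) (labExt S (extendLab N g) h), z⟫| :=
        Finset.sum_le_sum fun g _ => step1 g
    _ = ∑ G : {b // b ∈ S ∪ N} → Bool,
          |⟪x (S ∪ N) (labExt (S ∪ N) (fun _ => false) G), z⟫| := step2
    _ = ‖x ({u, v} : Finset V) l10‖ ^ 2 + ‖x ({u, v} : Finset V) l01‖ ^ 2 := by
        rw [Finset.sum_congr rfl fun G _ => step3 G, Finset.sum_add_distrib,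
          pair_sum hx (S ∪ N) hc u v huv huM hvM l10,
          pair_sum hx (S ∪ N) hc u v huv huM hvM l01]
    _ = ‖z‖ ^ 2 := by
        rw [hz, dist_identity hx u v huv (by omega)]

/-- `x_a` lies in the span of the `w_g`, for `a ∈ N`. -/
lemma xVec_mem_span (N : Finset V) (hNc : N.card ≤ r + 1) (a : V) (ha : a ∈ N) :
    xVec x a ∈ Submodule.span ℝ
      (Set.range (fun g : {b // b ∈ N} → Bool => x N (extendLab N g))) := by
  classical
  set S : Finset V := N \ {a} with hS
  have hsub : ({a} : Finset V) ⊆ N := Finset.singleton_subset_iff.mpr ha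
  have hd : Disjoint S ({a} : Finset V) := Finset.sdiff_disjoint
  have hM : S ∪ {a} = N := Finset.sdiff_union_of_subset hsub
  have hc : (S ∪ {a}).card ≤ r + 1 := by rw [hM]; exact hNc
  have hsum := sum_labExt hx S {a} hd hc (fun _ => true)
  have hxa : xVec x a = ∑ h : {b // b ∈ S} → Bool,
      x (S ∪ {a}) (labExt S (fun _ => true) h) := by
    rw [hsum]; rfl
  rw [hxa]
  refine Submodule.sum_mem _ fun h _ => Submodule.subset_span ?_
  refine ⟨fun b => if hb : (b : V) ∈ S then h ⟨b, hb⟩ else true, ?_⟩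
  show x N (extendLab N (fun b => if hb : (b : V) ∈ S then h ⟨b, hb⟩ else true))
      = x (S ∪ {a}) (labExt S (fun _ => true) h)
  have hxeq : x N (extendLab N (fun b => if hb : (b : V) ∈ S then h ⟨b, hb⟩ else true))
      = x (S ∪ {a}) (extendLab N (fun b => if hb : (b : V) ∈ S then h ⟨b, hb⟩ else true)) := by
    rw [hM]
  rw [hxeq]
  refine hx.localDep _ _ _ fun b hb => ?_
  have hbN : b ∈ N := hM ▸ hb
  by_cases hbS : b ∈ S <;> simp [extendLab, labExt, hbS, hbN]

/-- Fact C: projection lower bound. -/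
lemma proj_lower (N : Finset V) (hNc : N.card + 1 ≤ r + 1) (E : Finset (V × V))
    (hEN : ∀ p ∈ E, p.1 ∈ N ∧ p.2 ∈ N) (z : EuclideanSpace ℝ (Fin d))
    (hzb : ∀ g : {b // b ∈ N} → Bool,
      |⟪x N (extendLab N g), z⟫| ≤ ‖x N (extendLab N g)‖ ^ 2) :
    ‖z‖ ^ 2 - perpNormSq x E z
      ≤ ∑ g : {b // b ∈ N} → Bool, |⟪x N (extendLab N g), z⟫| := by
  classical
  set w : ({b // b ∈ N} → Bool) → EuclideanSpace ℝ (Fin d) :=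
    fun g => x N (extendLab N g) with hw
  set spanW := Submodule.span ℝ (Set.range w) with hspanW
  set spanE := Submodule.span ℝ ((fun p : V × V => xVec x p.1 - xVec x p.2) '' ↑E)
    with hspanE
  have hNc' : N.card ≤ r + 1 := by omega
  have hwortho : ∀ g g' : {b // b ∈ N} → Bool, g ≠ g' → ⟪w g, w g'⟫ = 0 := by
    intro g g' hne
    refine ortho_labExt hx N hNc' _ _ ?_
    have : ∃ b : {b // b ∈ N}, g b ≠ g' b := by
      by_contra hcon
      push_neg at hcon
      exact hne (funext hcon)
    obtain ⟨b, hb⟩ := this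
    refine ⟨b, b.2, ?_⟩
    rw [extendLab, dif_pos b.2, extendLab, dif_pos b.2]
    simpa using hb
  set c : ({b // b ∈ N} → Bool) → ℝ :=
    fun g => if w g = 0 then 0 else ⟪w g, z⟫ / ‖w g‖ ^ 2 with hcdef
  set Q : EuclideanSpace ℝ (Fin d) := ∑ g, c g • w g with hQ
  have hQW : Q ∈ spanW :=
    Submodule.sum_mem _ fun g _ => Submodule.smul_mem _ _ (Submodule.subset_span ⟨g, rfl⟩)
  have horth : ∀ g, ⟪z - Q, w g⟫ = 0 := by
    intro g
    rw [inner_sub_left, hQ, sum_inner]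
    have hsum : ∑ g' : {b // b ∈ N} → Bool, ⟪c g' • w g', w g⟫ = c g * ⟪w g, w g⟫ := by
      rw [Finset.sum_eq_single g]
      · rw [real_inner_smul_left]
      · intro g' _ hne
        rw [real_inner_smul_left, hwortho g' g hne, mul_zero]
      · intro h; exact absurd (Finset.mem_univ g) h
    rw [hsum]
    by_cases h0 : w g = 0
    · rw [hcdef]
      simp [h0]
    · have hn : ‖w g‖ ^ 2 ≠ 0 := pow_ne_zero _ (norm_ne_zero_iff.mpr h0)
      rw [hcdef]
      simp only [h0, if_false]
      rw [real_inner_self_eq_norm_sq, div_mul_cancel₀ _ hn, real_inner_comm, sub_self]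
  have hperp : ∀ e, e ∈ spanW → ⟪z - Q, e⟫ = 0 := by
    have hle : spanW ≤ (Submodule.span ℝ ({z - Q} : Set (EuclideanSpace ℝ (Fin d))))ᗮ := by
      rw [hspanW]
      refine Submodule.span_le.mpr ?_
      rintro v ⟨g, rfl⟩
      rw [SetLike.mem_coe, Submodule.mem_orthogonal]
      intro uu huu
      obtain ⟨a, rfl⟩ := Submodule.mem_span_singleton.mp huu
      rw [real_inner_smul_left, horth g, mul_zero]
    intro e he
    have := (Submodule.mem_orthogonal _ _).mp (hle he) (z - Q)
      (Submodule.mem_span_singleton_self _)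
    exact this
  have hspanle : spanE ≤ spanW := by
    rw [hspanE]
    refine Submodule.span_le.mpr ?_
    rintro v ⟨p, hp, rfl⟩
    obtain ⟨h1, h2⟩ := hEN p (by exact_mod_cast hp)
    exact Submodule.sub_mem _ (xVec_mem_span hx N hNc' _ h1) (xVec_mem_span hx N hNc' _ h2)
  set P : EuclideanSpace ℝ (Fin d) := (Submodule.orthogonalProjection spanE z : EuclideanSpace ℝ (Fin d)) with hP
  have hPW : P ∈ spanW := hspanle (Submodule.coe_mem _)
  have h1 : ‖z - Q‖ ^ 2 ≤ ‖z - P‖ ^ 2 := by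
    have : z - P = (z - Q) + (Q - P) := by abel
    rw [this, norm_add_sq_real, hperp _ (Submodule.sub_mem _ hQW hPW)]
    have := sq_nonneg ‖Q - P‖
    nlinarith [sq_nonneg ‖Q - P‖]
  have h2 : ‖z‖ ^ 2 = ‖z - Q‖ ^ 2 + ‖Q‖ ^ 2 := by
    have : z = (z - Q) + Q := by abel
    nth_rewrite 1 [this]
    rw [norm_add_sq_real, hperp _ hQW]
    ring
  have h3 : ‖Q‖ ^ 2 = ⟪z, Q⟫ := by
    have h := hperp Q hQW
    rw [inner_sub_left] at h
    rw [← real_inner_self_eq_norm_sq]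
    linarith
  have h4 : ⟪z, Q⟫ = ∑ g, c g * ⟪z, w g⟫ := by
    rw [hQ, inner_sum]
    refine Finset.sum_congr rfl fun g _ => ?_
    rw [real_inner_smul_right]
  have h5 : ∀ g, c g * ⟪z, w g⟫ ≤ |⟪w g, z⟫| := by
    intro g
    by_cases h0 : w g = 0
    · rw [hcdef]
      simp [h0]
    · have hn : 0 < ‖w g‖ ^ 2 := by
        have : ‖w g‖ ≠ 0 := norm_ne_zero_iff.mpr h0
        positivity
      have h1' : (⟪z, w g⟫ : ℝ) = ⟪w g, z⟫ := real_inner_comm _ _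
      have hzbg : |(⟪w g, z⟫ : ℝ)| ≤ ‖w g‖ ^ 2 := hzb g
      have hkey : (⟪w g, z⟫ : ℝ) / ‖w g‖ ^ 2 * ⟪z, w g⟫ ≤ |(⟪w g, z⟫ : ℝ)| := by
        rw [h1', div_mul_eq_mul_div, div_le_iff₀ hn]
        calc (⟪w g, z⟫ : ℝ) * ⟪w g, z⟫
            = |(⟪w g, z⟫ : ℝ)| * |(⟪w g, z⟫ : ℝ)| := by
              rw [← abs_mul]; exact (abs_mul_self _).symm
          _ ≤ |(⟪w g, z⟫ : ℝ)| * ‖w g‖ ^ 2 := mul_le_mul_of_nonneg_left hzbg (abs_nonneg _)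
      rw [hcdef]
      simpa [h0] using hkey
  have hfinal : ‖z‖ ^ 2 - ‖z - P‖ ^ 2 ≤ ∑ g, |⟪w g, z⟫| := by
    calc ‖z‖ ^ 2 - ‖z - P‖ ^ 2 ≤ ‖z‖ ^ 2 - ‖z - Q‖ ^ 2 := by linarith
      _ = ‖Q‖ ^ 2 := by linarith
      _ = ∑ g, c g * ⟪z, w g⟫ := by rw [h3, h4]
      _ ≤ ∑ g, |⟪w g, z⟫| := Finset.sum_le_sum fun g _ => h5 g
  exact hfinal

end Lasserre

lemma cutVal_nonneg' {V : Type*} [Fintype V] [DecidableEq V] (W : V → V → ℝ)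
    (hW : ∀ u v, 0 ≤ W u v) (T : Finset V) : 0 ≤ cutVal W T := by
  unfold cutVal
  refine div_nonneg (Finset.sum_nonneg fun u _ => Finset.sum_nonneg fun v _ =>
    mul_nonneg (hW u v) (abs_nonneg _)) (by norm_num)

lemma triple_swap {α : Type*} [Fintype α] (n : ℕ) (F : α → α → ℕ → ℝ) :
    ∑ u, ∑ v, ∑ i ∈ Finset.range n, F u v i
      = ∑ i ∈ Finset.range n, ∑ u, ∑ v, F u v i := by
  calc ∑ u, ∑ v, ∑ i ∈ Finset.range n, F u v i
      = ∑ u, ∑ i ∈ Finset.range n, ∑ v, F u v i :=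
        Finset.sum_congr rfl fun u _ => Finset.sum_comm
    _ = ∑ i ∈ Finset.range n, ∑ u, ∑ v, F u v i := Finset.sum_comm


/-- Guarantee of seed-based threshold rounding: given a Lasserre
solution `x`, seed edges `E` with endpoint set `N`, `|N| + 2 ≤ r + 1`, and
`ρ = (Σ_{u<v} D_{u,v}‖P^⊥(x_u − x_v)‖²)/(Σ_{u<v} D_{u,v}‖x_u − x_v‖²) < 1`,
there is a labeling `f` of `N` and a threshold `τ` such that the threshold cut
`T = {u : ⟨x_N(f), x_u⟩ ≥ τ}` has `D(T) > 0` and sparsity at most `Φ^SDP · (1 − ρ)⁻¹`. -/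
theorem stmt9 {V : Type*} [Fintype V] [DecidableEq V] (C D : V → V → ℝ)
    (hCsymm : ∀ u v, C u v = C v u) (hCnonneg : ∀ u v, 0 ≤ C u v)
    (hDsymm : ∀ u v, D u v = D v u) (hDnonneg : ∀ u v, 0 ≤ D u v)
    (r d : ℕ)
    (x : Finset V → (V → Bool) → EuclideanSpace ℝ (Fin d))
    (hx : IsLasserre V r d x)
    (E : Finset (V × V)) (hEdistinct : ∀ p ∈ E, p.1 ≠ p.2)
    (N : Finset V) (hNdef : ∀ a : V, a ∈ N ↔ ∃ p ∈ E, a = p.1 ∨ a = p.2)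
    (hNcard : N.card + 2 ≤ r + 1)
    (hD : 0 < edgeSum D x)
    (hρ : ((∑ u : V, ∑ v : V, D u v * perpNormSq x E (xVec x u - xVec x v)) / 2) /
        edgeSum D x < 1) :
    ∃ (f : V → Bool) (τ : ℝ),
      0 < cutVal D (Finset.univ.filter fun u => τ ≤ ⟪x N f, xVec x u⟫) ∧
      cutVal C (Finset.univ.filter fun u => τ ≤ ⟪x N f, xVec x u⟫) /
          cutVal D (Finset.univ.filter fun u => τ ≤ ⟪x N f, xVec x u⟫)
        ≤ (edgeSum C x / edgeSum D x) *
            (1 - ((∑ u : V, ∑ v : V, D u v * perpNormSq x E (xVec x u - xVec x v)) / 2) /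
              edgeSum D x)⁻¹ := by

  classical
  set SD : ℝ := edgeSum D x with hSDdef
  set SC : ℝ := edgeSum C x with hSCdef
  set Pn : ℝ := (∑ u : V, ∑ v : V, D u v * perpNormSq x E (xVec x u - xVec x v)) / 2
    with hPndef
  have hN1 : N.card + 1 ≤ r + 1 := by omega
  set y : ({b // b ∈ N} → Bool) → V → ℝ :=
    fun g u => ⟪x N (extendLab N g), xVec x u⟫ with hydef
  -- Fact B and Fact C in terms of y
  have hinnersub : ∀ (g : {b // b ∈ N} → Bool) (u v : V),
      y g u - y g v = ⟪x N (extendLab N g), xVec x u - xVec x v⟫ := by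
    intro g u v
    rw [hydef, inner_sub_right]
  have factB : ∀ u v : V, ∑ g : {b // b ∈ N} → Bool, |y g u - y g v|
      ≤ ‖xVec x u - xVec x v‖ ^ 2 := by
    intro u v
    calc ∑ g : {b // b ∈ N} → Bool, |y g u - y g v|
        = ∑ g : {b // b ∈ N} → Bool, |⟪x N (extendLab N g), xVec x u - xVec x v⟫| :=
          Finset.sum_congr rfl fun g _ => by rw [hinnersub]
      _ ≤ ‖xVec x u - xVec x v‖ ^ 2 := sum_abs_le hx N hNcard u v
  have factC : ∀ u v : V,
      ‖xVec x u - xVec x v‖ ^ 2 - perpNormSq x E (xVec x u - xVec x v)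
        ≤ ∑ g : {b // b ∈ N} → Bool, |y g u - y g v| := by
    intro u v
    have hEN : ∀ p ∈ E, p.1 ∈ N ∧ p.2 ∈ N := fun p hp =>
      ⟨(hNdef p.1).mpr ⟨p, hp, Or.inl rfl⟩, (hNdef p.2).mpr ⟨p, hp, Or.inr rfl⟩⟩
    have hzb : ∀ g : {b // b ∈ N} → Bool,
        |⟪x N (extendLab N g), xVec x u - xVec x v⟫| ≤ ‖x N (extendLab N g)‖ ^ 2 := by
      intro g
      obtain ⟨hu0, hu1⟩ := y_bounds hx N hN1 g u
      obtain ⟨hv0, hv1⟩ := y_bounds hx N hN1 g v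
      rw [inner_sub_right, abs_sub_le_iff]
      constructor <;> linarith
    calc ‖xVec x u - xVec x v‖ ^ 2 - perpNormSq x E (xVec x u - xVec x v)
        ≤ ∑ g : {b // b ∈ N} → Bool, |⟪x N (extendLab N g), xVec x u - xVec x v⟫| :=
          proj_lower hx N hN1 E hEN _ hzb
      _ = ∑ g : {b // b ∈ N} → Bool, |y g u - y g v| :=
          Finset.sum_congr rfl fun g _ => by rw [hinnersub]
  -- cut sums per labeling
  set a : ({b // b ∈ N} → Bool) → ℝ :=
    fun g => (∑ u : V, ∑ v : V, C u v * |y g u - y g v|) / 2 with hadef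
  set b : ({b // b ∈ N} → Bool) → ℝ :=
    fun g => (∑ u : V, ∑ v : V, D u v * |y g u - y g v|) / 2 with hbdef
  have han : ∀ g, 0 ≤ a g := fun g => div_nonneg (Finset.sum_nonneg fun u _ =>
    Finset.sum_nonneg fun v _ => mul_nonneg (hCnonneg u v) (abs_nonneg _)) (by norm_num)
  have hbn : ∀ g, 0 ≤ b g := fun g => div_nonneg (Finset.sum_nonneg fun u _ =>
    Finset.sum_nonneg fun v _ => mul_nonneg (hDnonneg u v) (abs_nonneg _)) (by norm_num)
  have hswap : ∀ W : V → V → ℝ,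
      ∑ g : {b // b ∈ N} → Bool, (∑ u : V, ∑ v : V, W u v * |y g u - y g v|) / 2
        = (∑ u : V, ∑ v : V, W u v * (∑ g : {b // b ∈ N} → Bool, |y g u - y g v|)) / 2 := by
    intro W
    rw [← Finset.sum_div]
    congr 1
    rw [Finset.sum_comm]
    refine Finset.sum_congr rfl fun u _ => ?_
    rw [Finset.sum_comm]
    refine Finset.sum_congr rfl fun v _ => ?_
    rw [Finset.mul_sum]
  have hA : ∑ g, a g ≤ SC := by
    rw [hadef]
    rw [hswap C, hSCdef, edgeSum]
    gcongr with u hu v hv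
    · exact hCnonneg u v
    · exact factB u v
  have hBineq : SD - Pn ≤ ∑ g, b g := by
    have e1 : SD - Pn = (∑ u : V, ∑ v : V, D u v *
        (‖xVec x u - xVec x v‖ ^ 2 - perpNormSq x E (xVec x u - xVec x v))) / 2 := by
      rw [hSDdef, hPndef, edgeSum, div_sub_div_same]
      congr 1
      rw [← Finset.sum_sub_distrib]
      refine Finset.sum_congr rfl fun u _ => ?_
      rw [← Finset.sum_sub_distrib]
      refine Finset.sum_congr rfl fun v _ => ?_
      ring
    rw [hbdef, e1, hswap D]
    gcongr with u hu v hv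
    · exact hDnonneg u v
    · exact factC u v
  have hPnlt : Pn < SD := (div_lt_one hD).mp hρ
  have hpos : 0 < SD - Pn := sub_pos.mpr hPnlt
  have hSCnn : 0 ≤ SC := by
    rw [hSCdef, edgeSum]
    exact div_nonneg (Finset.sum_nonneg fun u _ => Finset.sum_nonneg fun v _ =>
      mul_nonneg (hCnonneg u v) (sq_nonneg _)) (by norm_num)
  set K : ℝ := SC / (SD - Pn) with hKdef
  have hK0 : 0 ≤ K := div_nonneg hSCnn hpos.le
  have hab : ∑ g, a g ≤ K * ∑ g, b g := by
    calc ∑ g, a g ≤ SC := hA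
      _ = K * (SD - Pn) := by rw [hKdef, div_mul_cancel₀ _ (ne_of_gt hpos)]
      _ ≤ K * ∑ g, b g := mul_le_mul_of_nonneg_left hBineq hK0
  have hposb : 0 < ∑ g, b g := lt_of_lt_of_le hpos hBineq
  obtain ⟨g0, -, hg0pos, hg0le⟩ := avg_exists Finset.univ a b K (fun g _ => han g)
    (fun g _ => hbn g) hab hposb
  have hVne : Nonempty V := by
    by_contra hemp
    rw [not_nonempty_iff] at hemp
    have hb0 : b g0 = 0 := by
      rw [hbdef]
      simp
    rw [hb0] at hg0pos
    exact lt_irrefl 0 hg0pos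
  obtain ⟨n, τ, δ, hδ, hident⟩ := layercake (y g0)
  have hdecomp : ∀ W : V → V → ℝ,
      (∑ u : V, ∑ v : V, W u v * |y g0 u - y g0 v|) / 2
        = ∑ i ∈ Finset.range n, δ i *
            cutVal W (Finset.univ.filter fun u => τ i ≤ y g0 u) := by
    intro W
    have hcut : ∀ i, cutVal W (Finset.univ.filter fun u => τ i ≤ y g0 u)
        = (∑ u : V, ∑ v : V, W u v *
            |(if τ i ≤ y g0 u then (1:ℝ) else 0) - (if τ i ≤ y g0 v then (1:ℝ) else 0)|)
              / 2 := by
      intro i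
      simp only [cutVal, Finset.mem_filter, Finset.mem_univ, true_and]
    calc (∑ u : V, ∑ v : V, W u v * |y g0 u - y g0 v|) / 2
        = (∑ u : V, ∑ v : V, ∑ i ∈ Finset.range n,
            W u v * (δ i * |(if τ i ≤ y g0 u then (1:ℝ) else 0)
              - (if τ i ≤ y g0 v then (1:ℝ) else 0)|)) / 2 := by
          congr 1
          refine Finset.sum_congr rfl fun u _ => Finset.sum_congr rfl fun v _ => ?_
          rw [hident u v, Finset.mul_sum]
      _ = (∑ i ∈ Finset.range n, ∑ u : V, ∑ v : V,
            W u v * (δ i * |(if τ i ≤ y g0 u then (1:ℝ) else 0)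
              - (if τ i ≤ y g0 v then (1:ℝ) else 0)|)) / 2 := by
          rw [triple_swap]
      _ = ∑ i ∈ Finset.range n, δ i *
            cutVal W (Finset.univ.filter fun u => τ i ≤ y g0 u) := by
          rw [Finset.sum_div]
          refine Finset.sum_congr rfl fun i _ => ?_
          rw [hcut i, ← mul_div_assoc]
          congr 1
          rw [Finset.mul_sum]
          refine Finset.sum_congr rfl fun u _ => ?_
          rw [Finset.mul_sum]
          refine Finset.sum_congr rfl fun v _ => ?_
          ring
  have hag0 : a g0 = ∑ i ∈ Finset.range n, δ i *
      cutVal C (Finset.univ.filter fun u => τ i ≤ y g0 u) := hdecomp C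
  have hbg0 : b g0 = ∑ i ∈ Finset.range n, δ i *
      cutVal D (Finset.univ.filter fun u => τ i ≤ y g0 u) := hdecomp D
  obtain ⟨i, hi, hbipos, hile⟩ := avg_exists (Finset.range n)
    (fun i => δ i * cutVal C (Finset.univ.filter fun u => τ i ≤ y g0 u))
    (fun i => δ i * cutVal D (Finset.univ.filter fun u => τ i ≤ y g0 u)) K
    (fun i _ => mul_nonneg (hδ i) (cutVal_nonneg' C hCnonneg _))
    (fun i _ => mul_nonneg (hδ i) (cutVal_nonneg' D hDnonneg _))
    (by rw [← hag0, ← hbg0]; exact hg0le)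
    (by rw [← hbg0]; exact hg0pos)
  have hδi : 0 < δ i := by
    rcases (hδ i).lt_or_eq with h | h
    · exact h
    · exfalso
      rw [← h, zero_mul] at hbipos
      exact lt_irrefl 0 hbipos
  have hDcut : 0 < cutVal D (Finset.univ.filter fun u => τ i ≤ y g0 u) := by
    by_contra hcon
    push_neg at hcon
    nlinarith
  have hCD : cutVal C (Finset.univ.filter fun u => τ i ≤ y g0 u)
      ≤ K * cutVal D (Finset.univ.filter fun u => τ i ≤ y g0 u) := by
    have h2 : δ i * cutVal C (Finset.univ.filter fun u => τ i ≤ y g0 u)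
        ≤ δ i * (K * cutVal D (Finset.univ.filter fun u => τ i ≤ y g0 u)) := by
      calc δ i * cutVal C (Finset.univ.filter fun u => τ i ≤ y g0 u)
          ≤ K * (δ i * cutVal D (Finset.univ.filter fun u => τ i ≤ y g0 u)) := hile
        _ = δ i * (K * cutVal D (Finset.univ.filter fun u => τ i ≤ y g0 u)) := by ring
    exact le_of_mul_le_mul_left h2 hδi
  have hfin : cutVal C (Finset.univ.filter fun u => τ i ≤ y g0 u)
      / cutVal D (Finset.univ.filter fun u => τ i ≤ y g0 u) ≤ K :=
    (div_le_iff₀ hDcut).mpr (by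
      calc cutVal C (Finset.univ.filter fun u => τ i ≤ y g0 u)
          ≤ K * cutVal D (Finset.univ.filter fun u => τ i ≤ y g0 u) := hCD)
  have hSDne : SD ≠ 0 := ne_of_gt hD
  have hne : SD - Pn ≠ 0 := ne_of_gt hpos
  have h1ne : (1:ℝ) - Pn / SD ≠ 0 := by
    have : (1:ℝ) - Pn / SD = (SD - Pn) / SD := by field_simp
    rw [this]
    exact div_ne_zero hne hSDne
  have hKeq : SC / SD * (1 - Pn / SD)⁻¹ = K := by
    rw [hKdef]
    field_simp
  refine ⟨extendLab N g0, τ i, ?_, ?_⟩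
  · exact hDcut
  · rw [hKeq]
    exact hfin
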